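/- Fix $m>0$, $J\in\mathbb{R}$, and an integer $N_0 \ge 2$. Let $f:[m/2,\infty)\to\mathbb{R}$ be $C^1$; for $0 \le n \le N_0$ let $X_n:[m/2,\infty)\to\mathbb{R}$ be $C^1$ and bounded, and for $1 \le n \le N_0$ let $Y_n:[m/2,\infty)\to\mathbb{R}$ be continuous. Assume: (i) $Y_1(r) = \frac{r^2\psi_0(r)}{3m} X_1'(r)$ and $X_{1\infty} = \lim_{r\to\infty} X_1(r)$ exists; (ii) for each $2 \le n \le N_0$, with $N_n = \frac{n(n+1)}{2}$, the improper integrals $I_n = \int_{m/2}^{\infty}\big[(r X_n' - \beta_n Y_n)^2 + 2(N_n-1)\alpha X_n Y_n\big]\frac{dr}{\alpha r^2 \psi_0}$ and $\int_{m/2}^{\infty}\frac{\beta_n^2}{\alpha r^2\psi_0}\big(Y_n - \frac{r}{\beta_n}X_n' + \frac{(N_n-1)\alpha}{\beta_n^2}X_n\big)^2 dr$ converge; (iii) the improper integral $P_J = 2\int_{m/2}^{\infty}\frac{m\alpha(r)}{4 r^2 \psi_0(r)^7}\int_{-1}^{1}\big[f'(r)^2(1-z^2)^2 + \frac{(1-z^2)(4f(r)z+3J)^2}{r^2}\big]dz\,dr$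 converges. Then, with $I_1 = \int_{m/2}^{\infty}\frac{X_1 Y_1}{r^2\psi_0}dr$ and $c_n = \frac{2n(n+1)}{(n-1)(n+2)(2n+1)}$: $X_0(m/2)^2 - \frac32\sum_{n=0}^{N_0}\frac{X_n(m/2)^2}{(2n+1)^3} + P_J + \frac{2m}{3} I_1 + \frac{m}{2}\sum_{n=2}^{N_0} c_n I_n + \frac12\sum_{n=0}^{N_0}\frac{X_n(m/2)^2}{2n+1} \;\ge\; \frac{J^2}{4m^2} + \frac19 X_{1\infty}^2 + \sum_{n=2}^{N_0}\frac{(n-1)(n+2)\, X_n(m/2)^2}{2\,(n^2+n+1)\,(2n+1)^3}$. -/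

import Mathlib

/-- `ψ₀(r) = 1 + m/(2r)`. -/
noncomputable def psi0 (m r : ℝ) : ℝ := 1 + m / (2 * r)

/-- `α(r) = 1 - m/(2r)`. -/
noncomputable def alphaF (m r : ℝ) : ℝ := 1 - m / (2 * r)

/-- `β_n(r) = (n(n+1)/2 - 1) ψ₀(r) + 3m/(r ψ₀(r))`. -/
noncomputable def betaF (m : ℝ) (n : ℕ) (r : ℝ) : ℝ :=
  ((n : ℝ) * ((n : ℝ) + 1) / 2 - 1) * psi0 m r + 3 * m / (r * psi0 m r)

/-- `c_n = 2n(n+1)/((n-1)(n+2)(2n+1))`. -/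
noncomputable def cC (n : ℕ) : ℝ :=
  (2 * (n : ℝ) * ((n : ℝ) + 1)) / (((n : ℝ) - 1) * ((n : ℝ) + 2) * (2 * (n : ℝ) + 1))

/-- The improper integral `∫_a^∞ f` converges and equals `L`. -/
def ImproperEq (f : ℝ → ℝ) (a L : ℝ) : Prop :=
  (∀ b : ℝ, IntervalIntegrable f MeasureTheory.volume a b) ∧
    Filter.Tendsto (fun b : ℝ => ∫ r in a..b, f r) Filter.atTop (nhds L)

/-!
Each term is bounded separately. The dipole integrand is the derivative of `X₁²/(6m)`, so `I₁`
is a pure boundary term. In `P_J` the `z`-integral is explicit; dropping the nonnegative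
`f`-contributions leaves a density whose integral over `[m/2, ∞)` is exactly `J²/(4m²)`. For
`n ≥ 2`, completing the square writes the integrand of `I_n` as the derivative of
`(N_n - 1) X_n² / (β_n r ψ₀)` plus a nonnegative square; as `X_n` is bounded this boundary term
vanishes at infinity, so `I_n` is at least minus its value at `r = m/2`. The resulting lower
bounds cancel the boundary sums mode by mode, leaving exactly the right-hand side.
-/

open Filter Set Topology MeasureTheory

lemma tendsto_intervalIntegral_of_hasDerivAt {f F : ℝ → ℝ} {a M : ℝ}
    (hf : ∀ b, a ≤ b → IntervalIntegrable f volume a b) (hF : ContinuousOn F (Ici a))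
    (hderiv : ∀ x, a < x → HasDerivAt F (f x) x) (hlim : Tendsto F atTop (𝓝 M)) :
    Tendsto (fun b => ∫ x in a..b, f x) atTop (𝓝 (M - F a)) := by
  refine (hlim.sub_const (F a)).congr' <| (eventually_ge_atTop a).mono fun b hb => ?_
  exact (intervalIntegral.integral_eq_sub_of_hasDeriv_right_of_le hb
    (hF.mono Icc_subset_Ici_self) (fun x hx => (hderiv x hx.1).hasDerivWithinAt) (hf b hb)).symm

namespace ImproperEq

variable {f g F : ℝ → ℝ} {a L M : ℝ}

lemma sub (hf : ImproperEq f a L) (hg : ImproperEq g a M) :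
    ImproperEq (fun x => f x - g x) a (L - M) :=
  ⟨fun b => (hf.1 b).sub (hg.1 b), (hf.2.sub hg.2).congr fun b =>
    (intervalIntegral.integral_sub (hf.1 b) (hg.1 b)).symm⟩

lemma nonneg (hf : ImproperEq f a L) (h : ∀ x, a ≤ x → 0 ≤ f x) : 0 ≤ L :=
  ge_of_tendsto hf.2 <| (eventually_ge_atTop a).mono fun _ hb =>
    intervalIntegral.integral_nonneg hb fun x hx => h x hx.1

lemma eq_sub_of_hasDerivAt (hf : ImproperEq f a L) (hF : ContinuousOn F (Ici a))
    (hderiv : ∀ x, a < x → HasDerivAt F (f x) x) (hlim : Tendsto F atTop (𝓝 M)) :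
    L = M - F a :=
  tendsto_nhds_unique hf.2 <|
    tendsto_intervalIntegral_of_hasDerivAt (fun b _ => hf.1 b) hF hderiv hlim

lemma sub_le_of_hasDerivAt (hg : ImproperEq g a L) (hfg : ∀ x, a ≤ x → f x ≤ g x)
    (hf : ContinuousOn f (Ici a)) (hF : ContinuousOn F (Ici a))
    (hderiv : ∀ x, a < x → HasDerivAt F (f x) x) (hlim : Tendsto F atTop (𝓝 M)) :
    M - F a ≤ L := by
  have hfi : ∀ b, a ≤ b → IntervalIntegrable f volume a b := fun b hb =>
    (hf.mono Icc_subset_Ici_self).intervalIntegrable_of_Icc hb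
  refine le_of_tendsto_of_tendsto (tendsto_intervalIntegral_of_hasDerivAt hfi hF hderiv hlim)
    hg.2 <| (eventually_ge_atTop a).mono fun b hb => ?_
  exact intervalIntegral.integral_mono_on hb (hfi b hb) (hg.1 b) fun x hx => hfg x hx.1

end ImproperEq

section Schwarzschild

variable {m r : ℝ}

lemma psi0_pos (hm : 0 < m) (hr : 0 < r) : 0 < psi0 m r := by
  unfold psi0; positivity

lemma one_le_psi0 (hm : 0 ≤ m) (hr : 0 < r) : 1 ≤ psi0 m r := by
  unfold psi0
  have : 0 ≤ m / (2 * r) := by positivity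
  linarith

lemma alphaF_pos (hr : m / 2 < r) (h0 : 0 < r) : 0 < alphaF m r := by
  unfold alphaF
  rw [sub_pos, div_lt_one (by positivity)]
  linarith

lemma alphaF_nonneg (hr : m / 2 ≤ r) (h0 : 0 < r) : 0 ≤ alphaF m r := by
  unfold alphaF
  rw [sub_nonneg, div_le_one (by positivity)]
  linarith

lemma alphaF_eq_two_sub_psi0 : alphaF m r = 2 - psi0 m r := by
  unfold alphaF psi0; ring

lemma psi0_half (hm : m ≠ 0) : psi0 m (m / 2) = 2 := by
  unfold psi0; field_simp; norm_num

lemma hasDerivAt_psi0 (hr : r ≠ 0) : HasDerivAt (psi0 m) (-m / (2 * r ^ 2)) r := by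
  have h := ((hasDerivAt_inv hr).const_mul (m / 2)).const_add 1
  rw [show psi0 m = fun x => 1 + m / 2 * x⁻¹ by funext x; unfold psi0; ring]
  exact h.congr_deriv (by ring)

lemma continuousOn_psi0 (hm : 0 < m) : ContinuousOn (psi0 m) (Ici (m / 2)) := fun x hx =>
  (hasDerivAt_psi0 (by linarith [mem_Ici.mp hx] : x ≠ 0)).continuousAt.continuousWithinAt

lemma tendsto_psi0_atTop : Tendsto (psi0 m) atTop (𝓝 1) := by
  have h := tendsto_const_nhds (x := (1 : ℝ)).add
    ((tendsto_const_nhds (x := m / 2)).div_atTop tendsto_id)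
  rw [add_zero] at h
  refine h.congr fun x => ?_
  simp only [psi0, id, div_div]

end Schwarzschild

lemma hasDerivAt_deriv_of_contDiffOn_Ici {X : ℝ → ℝ} {a x : ℝ}
    (hX : ContDiffOn ℝ 1 X (Ici a)) (hx : a < x) : HasDerivAt X (deriv X x) x :=
  ((hX.contDiffAt (Ici_mem_nhds hx)).differentiableAt one_ne_zero).hasDerivAt

lemma dipole_integral_eq {m Xinf I : ℝ} {X Y : ℝ → ℝ} (hm : 0 < m)
    (hX : ContDiffOn ℝ 1 X (Ici (m / 2)))
    (hY : ∀ r, m / 2 < r → Y r = r ^ 2 * psi0 m r / (3 * m) * deriv X r)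
    (hlim : Tendsto X atTop (𝓝 Xinf))
    (hI : ImproperEq (fun r => X r * Y r / (r ^ 2 * psi0 m r)) (m / 2) I) :
    I = (Xinf ^ 2 - X (m / 2) ^ 2) / (6 * m) := by
  have hderiv : ∀ x, m / 2 < x →
      HasDerivAt (fun r => X r ^ 2 / (6 * m)) (X x * Y x / (x ^ 2 * psi0 m x)) x := by
    intro x hx
    have hx0 : 0 < x := by linarith
    have hψ := (psi0_pos hm hx0).ne'
    refine (((hasDerivAt_deriv_of_contDiffOn_Ici hX hx).pow 2).div_const _).congr_deriv ?_
    rw [hY x hx]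
    field_simp
    ring
  rw [hI.eq_sub_of_hasDerivAt (F := fun r => X r ^ 2 / (6 * m))
    ((hX.continuousOn.pow 2).div_const _) hderiv ((hlim.pow 2).div_const _)]
  ring

lemma integral_quartic_neg_one_one (c₀ c₁ c₂ c₃ c₄ : ℝ) :
    ∫ z in (-1 : ℝ)..1, (c₀ + c₁ * z + c₂ * z ^ 2 + c₃ * z ^ 3 + c₄ * z ^ 4)
      = 2 * c₀ + 2 * c₂ / 3 + 2 * c₄ / 5 := by
  have hderiv : ∀ z : ℝ, HasDerivAt
      (fun z => c₀ * z + c₁ * z ^ 2 / 2 + c₂ * z ^ 3 / 3 + c₃ * z ^ 4 / 4 + c₄ * z ^ 5 / 5)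
      (c₀ + c₁ * z + c₂ * z ^ 2 + c₃ * z ^ 3 + c₄ * z ^ 4) z := fun z => by
    refine ((((((hasDerivAt_id z).const_mul c₀).add
      (((hasDerivAt_pow 2 z).const_mul c₁).div_const 2)).add
      (((hasDerivAt_pow 3 z).const_mul c₂).div_const 3)).add
      (((hasDerivAt_pow 4 z).const_mul c₃).div_const 4)).add
      (((hasDerivAt_pow 5 z).const_mul c₄).div_const 5)).congr_deriv ?_
    ring
  rw [intervalIntegral.integral_eq_sub_of_hasDerivAt (fun z _ => hderiv z)
    (by apply Continuous.intervalIntegrable; fun_prop)]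
  ring

lemma integral_angular_eq (A B C r : ℝ) :
    ∫ z in (-1 : ℝ)..1, (A * (1 - z ^ 2) ^ 2 + (1 - z ^ 2) * (B * z + C) ^ 2 / r ^ 2)
      = 16 * A / 15 + (4 * B ^ 2 / 15 + 4 * C ^ 2 / 3) / r ^ 2 := by
  have hpoly : (fun z : ℝ => A * (1 - z ^ 2) ^ 2 + (1 - z ^ 2) * (B * z + C) ^ 2 / r ^ 2)
      = fun z => (A + C ^ 2 / r ^ 2) + (2 * B * C / r ^ 2) * z
        + (-2 * A + (B ^ 2 - C ^ 2) / r ^ 2) * z ^ 2 + (-2 * B * C / r ^ 2) * z ^ 3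
        + (A - B ^ 2 / r ^ 2) * z ^ 4 := by
    funext z; ring
  rw [hpoly, integral_quartic_neg_one_one]
  ring

/-- Antiderivative of `6 m α / (r⁴ ψ₀⁷)`: in the variable `w = 1/ψ₀`, which runs from `1/2` at
`r = m/2` to `1` at infinity, this density is `(48/m²) w² (2w - 1) (1 - w)² dw`. -/
noncomputable def angularPotential (m r : ℝ) : ℝ :=
  -(48 / m ^ 2) * ((psi0 m r)⁻¹ ^ 3 / 3 - (psi0 m r)⁻¹ ^ 4 + (psi0 m r)⁻¹ ^ 5
    - (psi0 m r)⁻¹ ^ 6 / 3)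

section angularPotential

variable {m r : ℝ}

lemma hasDerivAt_angularPotential (hm : 0 < m) (hr : 0 < r) :
    HasDerivAt (angularPotential m) (6 * m * alphaF m r / (r ^ 4 * psi0 m r ^ 7)) r := by
  have hψ := (psi0_pos hm hr).ne'
  have hw := (hasDerivAt_inv hψ).comp r (hasDerivAt_psi0 (m := m) hr.ne')
  refine (((((hw.pow 3).div_const 3).sub (hw.pow 4)).add (hw.pow 5)).sub
    ((hw.pow 6).div_const 3)).const_mul (-(48 / m ^ 2)) |>.congr_deriv ?_
  have hm_eq : m = 2 * r * (psi0 m r - 1) := by unfold psi0; field_simp; ring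
  have hψ₁ : psi0 m r - 1 ≠ 0 := by
    rw [show psi0 m r - 1 = m / (2 * r) by unfold psi0; ring]; positivity
  -- with `m = 2r(ψ₀ - 1)` the claim becomes a rational identity in `ψ₀` and `r`
  rw [alphaF_eq_two_sub_psi0, Function.comp_apply]
  generalize psi0 m r = ψ at hψ hψ₁ hm_eq ⊢
  subst hm_eq
  norm_num only
  field_simp
  ring

lemma angularPotential_half (hm : 0 < m) : angularPotential m (m / 2) = -1 / (4 * m ^ 2) := by
  rw [angularPotential, psi0_half hm.ne']
  field_simp
  norm_num

lemma tendsto_angularPotential : Tendsto (angularPotential m) atTop (𝓝 0) := by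
  have hcont : ContinuousAt (fun w : ℝ => -(48 / m ^ 2) *
      (w⁻¹ ^ 3 / 3 - w⁻¹ ^ 4 + w⁻¹ ^ 5 - w⁻¹ ^ 6 / 3)) 1 := by
    fun_prop (disch := norm_num)
  have hval : (fun w : ℝ => -(48 / m ^ 2) *
      (w⁻¹ ^ 3 / 3 - w⁻¹ ^ 4 + w⁻¹ ^ 5 - w⁻¹ ^ 6 / 3)) 1 = 0 := by norm_num
  exact hval ▸ hcont.tendsto.comp tendsto_psi0_atTop

end angularPotential

section angularMomentum

variable {m r : ℝ}

lemma continuousOn_angularDensity (hm : 0 < m) :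
    ContinuousOn (fun r => 6 * m * alphaF m r / (r ^ 4 * psi0 m r ^ 7)) (Ici (m / 2)) := by
  simp only [alphaF_eq_two_sub_psi0]
  refine (continuousOn_const.mul (continuousOn_const.sub (continuousOn_psi0 hm))).div
    ((continuousOn_id.pow 4).mul ((continuousOn_psi0 hm).pow 7)) fun x hx => ?_
  have hx0 : 0 < x := by linarith [mem_Ici.mp hx]
  have := psi0_pos hm hx0
  positivity

lemma angularDensity_le (hm : 0 < m) (hr : m / 2 ≤ r) (A B J : ℝ) :
    J ^ 2 * (6 * m * alphaF m r / (r ^ 4 * psi0 m r ^ 7)) ≤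
      2 * (m * alphaF m r / (4 * r ^ 2 * psi0 m r ^ 7)) *
        ∫ z in (-1 : ℝ)..1,
          (A ^ 2 * (1 - z ^ 2) ^ 2 + (1 - z ^ 2) * (4 * B * z + 3 * J) ^ 2 / r ^ 2) := by
  have hr0 : 0 < r := by linarith
  have := psi0_pos hm hr0
  have := alphaF_nonneg hr hr0
  rw [integral_angular_eq]
  have hJ : J ^ 2 * (6 * m * alphaF m r / (r ^ 4 * psi0 m r ^ 7)) =
      2 * (m * alphaF m r / (4 * r ^ 2 * psi0 m r ^ 7)) * (4 * (3 * J) ^ 2 / 3 / r ^ 2) := by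
    field_simp; ring
  rw [hJ]
  gcongr
  have : 0 ≤ 16 * A ^ 2 / 15 + 4 * (4 * B) ^ 2 / 15 / r ^ 2 := by positivity
  linarith [add_div (4 * (4 * B) ^ 2 / 15) (4 * (3 * J) ^ 2 / 3) (r ^ 2)]

lemma sq_div_le_of_improperEq_angular {J PJ : ℝ} {f : ℝ → ℝ} (hm : 0 < m)
    (hPJ : ImproperEq
      (fun r : ℝ => 2 * (m * alphaF m r / (4 * r ^ 2 * (psi0 m r) ^ 7)) *
        ∫ z in (-1 : ℝ)..1,
          ((deriv f r) ^ 2 * (1 - z ^ 2) ^ 2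
            + (1 - z ^ 2) * (4 * f r * z + 3 * J) ^ 2 / r ^ 2))
      (m / 2) PJ) :
    J ^ 2 / (4 * m ^ 2) ≤ PJ := by
  have hderiv : ∀ x, 0 < x → HasDerivAt (fun r => J ^ 2 * angularPotential m r)
      (J ^ 2 * (6 * m * alphaF m x / (x ^ 4 * psi0 m x ^ 7))) x := fun x hx =>
    (hasDerivAt_angularPotential hm hx).const_mul _
  have hcont : ContinuousOn (fun r => J ^ 2 * angularPotential m r) (Ici (m / 2)) :=
    fun x hx => (hderiv x (by linarith [mem_Ici.mp hx])).continuousAt.continuousWithinAt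
  have h := hPJ.sub_le_of_hasDerivAt (fun x hx => angularDensity_le hm hx _ _ _)
    (continuousOn_const.mul (continuousOn_angularDensity hm)) hcont
    (fun x hx => hderiv x (by linarith))
    (by simpa using tendsto_angularPotential.const_mul (J ^ 2))
  rw [angularPotential_half hm] at h
  field_simp at h ⊢
  linarith

end angularMomentum

lemma completeSquare_identity (ν r ψ α β X X' Y : ℝ) (hr : r ≠ 0) (hψ : ψ ≠ 0) (hα : α ≠ 0)
    (hβ : β ≠ 0) :
    ((r * X' - β * Y) ^ 2 + 2 * ν * α * X * Y) / (α * r ^ 2 * ψ)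
        - β ^ 2 / (α * r ^ 2 * ψ) * (Y - r / β * X' + ν * α / β ^ 2 * X) ^ 2
      = (ν * (2 * X * X') * (β * r * ψ) - ν * X ^ 2 * (ν * α * ψ)) / (β * r * ψ) ^ 2 := by
  field_simp
  ring

/-- The integrand of `I_n`. -/
noncomputable def modeIntegrand (m : ℝ) (n : ℕ) (X Y : ℝ → ℝ) (r : ℝ) : ℝ :=
  ((r * deriv X r - betaF m n r * Y r) ^ 2
      + 2 * ((n : ℝ) * ((n : ℝ) + 1) / 2 - 1) * alphaF m r * X r * Y r)
    / (alphaF m r * r ^ 2 * psi0 m r)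

/-- The square completed in `modeIntegrand`. -/
noncomputable def modeSquare (m : ℝ) (n : ℕ) (X Y : ℝ → ℝ) (r : ℝ) : ℝ :=
  (betaF m n r) ^ 2 / (alphaF m r * r ^ 2 * psi0 m r) *
    (Y r - r / betaF m n r * deriv X r
      + ((n : ℝ) * ((n : ℝ) + 1) / 2 - 1) * alphaF m r / (betaF m n r) ^ 2 * X r) ^ 2

/-- `(N_n - 1) X² / (β_n r ψ₀)`, whose derivative is `modeIntegrand - modeSquare`. -/
noncomputable def modeBoundary (m : ℝ) (n : ℕ) (X : ℝ → ℝ) (r : ℝ) : ℝ :=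
  ((n : ℝ) * ((n : ℝ) + 1) / 2 - 1) * X r ^ 2
    / (((n : ℝ) * ((n : ℝ) + 1) / 2 - 1) * r * psi0 m r ^ 2 + 3 * m)

section modes

variable {m r : ℝ} {n : ℕ} {X Y : ℝ → ℝ}

lemma modeCoeff_nonneg (hn : 1 ≤ n) : 0 ≤ (n : ℝ) * ((n : ℝ) + 1) / 2 - 1 := by
  have : (1 : ℝ) ≤ n := by exact_mod_cast hn
  nlinarith

lemma betaF_mul_mul_psi0 (hr : r ≠ 0) (hψ : psi0 m r ≠ 0) :
    betaF m n r * r * psi0 m r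
      = ((n : ℝ) * ((n : ℝ) + 1) / 2 - 1) * r * psi0 m r ^ 2 + 3 * m := by
  unfold betaF
  field_simp

lemma hasDerivAt_mul_psi0_sq (hr : r ≠ 0) :
    HasDerivAt (fun r => r * psi0 m r ^ 2) (alphaF m r * psi0 m r) r := by
  refine ((hasDerivAt_id r).mul ((hasDerivAt_psi0 hr).pow 2)).congr_deriv ?_
  norm_num only [id, Pi.pow_apply, alphaF, psi0]
  field_simp
  ring

lemma modeSquare_nonneg (hm : 0 < m) (hr : m / 2 ≤ r) : 0 ≤ modeSquare m n X Y r := by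
  have hr0 : 0 < r := by linarith
  have := psi0_pos hm hr0
  have := alphaF_nonneg hr hr0
  unfold modeSquare
  positivity

lemma hasDerivAt_modeBoundary (hm : 0 < m) (hn : 1 ≤ n) (hr : m / 2 < r)
    (hX : HasDerivAt X (deriv X r) r) :
    HasDerivAt (modeBoundary m n X) (modeIntegrand m n X Y r - modeSquare m n X Y r) r := by
  have hr0 : 0 < r := by linarith
  have hψ := psi0_pos hm hr0
  have hα := alphaF_pos hr hr0
  have hν := modeCoeff_nonneg hn
  have hD := betaF_mul_mul_psi0 (n := n) hr0.ne' hψ.ne'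
  have hβ : betaF m n r ≠ 0 := by
    intro h0
    rw [h0] at hD
    nlinarith [mul_nonneg (mul_nonneg hν hr0.le) (sq_nonneg (psi0 m r))]
  have hB : modeBoundary m n X = fun r =>
      ((n : ℝ) * ((n : ℝ) + 1) / 2 - 1) * X r ^ 2
        / (((n : ℝ) * ((n : ℝ) + 1) / 2 - 1) * (r * psi0 m r ^ 2) + 3 * m) := by
    funext r; rw [modeBoundary, mul_assoc]
  rw [hB]
  refine (((hX.pow 2).const_mul _).div
    (((hasDerivAt_mul_psi0_sq hr0.ne').const_mul _).add_const (3 * m)) ?_).congr_deriv ?_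
  · rw [← mul_assoc, ← hD]
    exact mul_ne_zero (mul_ne_zero hβ hr0.ne') hψ.ne'
  · rw [modeIntegrand, modeSquare,
      completeSquare_identity _ _ _ _ _ _ _ _ hr0.ne' hψ.ne' hα.ne' hβ, hD]
    norm_num only [Pi.pow_apply]
    ring

lemma modeBoundary_denom_pos (hm : 0 < m) (hn : 1 ≤ n) (hr : 0 < r) :
    0 < ((n : ℝ) * ((n : ℝ) + 1) / 2 - 1) * r * psi0 m r ^ 2 + 3 * m := by
  have := modeCoeff_nonneg hn
  positivity

lemma continuousOn_modeBoundary (hm : 0 < m) (hn : 1 ≤ n) (hX : ContinuousOn X (Ici (m / 2))) :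
    ContinuousOn (modeBoundary m n X) (Ici (m / 2)) :=
  (continuousOn_const.mul (hX.pow 2)).div
    (((continuousOn_const.mul continuousOn_id).mul ((continuousOn_psi0 hm).pow 2)).add
      continuousOn_const)
    fun x hx => (modeBoundary_denom_pos hm hn (by linarith [mem_Ici.mp hx])).ne'

lemma tendsto_modeBoundary (hm : 0 < m) (hn : 1 ≤ n) {C : ℝ}
    (hC : ∀ r, m / 2 ≤ r → |X r| ≤ C) : Tendsto (modeBoundary m n X) atTop (𝓝 0) := by
  have hν := modeCoeff_nonneg hn
  refine squeeze_zero' ((eventually_ge_atTop (m / 2)).mono fun r hr => ?_)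
    ((eventually_ge_atTop (m / 2)).mono fun r hr => ?_)
    ((tendsto_const_nhds (x := C ^ 2)).div_atTop tendsto_id)
  · have := modeBoundary_denom_pos hm hn (by linarith : 0 < r)
    unfold modeBoundary
    positivity
  · have hr0 : 0 < r := by linarith
    have hψ := one_le_psi0 hm.le hr0
    have hX2 : X r ^ 2 ≤ C ^ 2 := sq_le_sq' (abs_le.mp (hC r hr)).1 (abs_le.mp (hC r hr)).2
    rw [modeBoundary, id, div_le_div_iff₀ (modeBoundary_denom_pos hm hn hr0) hr0]
    have h1 : r ≤ r * psi0 m r ^ 2 := le_mul_of_one_le_right hr0.le (one_le_pow₀ hψ)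
    nlinarith [mul_le_mul_of_nonneg_left hX2 hν, sq_nonneg (X r), mul_nonneg hν (sq_nonneg C)]

lemma modeBoundary_half (hm : 0 < m) :
    modeBoundary m n X (m / 2) = ((n : ℝ) * ((n : ℝ) + 1) / 2 - 1) * X (m / 2) ^ 2
      / (((n : ℝ) ^ 2 + n + 1) * m) := by
  rw [modeBoundary, psi0_half hm.ne']
  congr 1
  ring

lemma neg_modeBoundary_le {I L : ℝ} (hm : 0 < m) (hn : 1 ≤ n)
    (hX : ContDiffOn ℝ 1 X (Ici (m / 2))) (hXb : ∃ C, ∀ r, m / 2 ≤ r → |X r| ≤ C)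
    (hI : ImproperEq (modeIntegrand m n X Y) (m / 2) I)
    (hL : ImproperEq (modeSquare m n X Y) (m / 2) L) :
    -modeBoundary m n X (m / 2) ≤ I := by
  obtain ⟨C, hC⟩ := hXb
  have hIL := (hI.sub hL).eq_sub_of_hasDerivAt
    (continuousOn_modeBoundary hm hn hX.continuousOn)
    (fun x hx => hasDerivAt_modeBoundary hm hn hx (hasDerivAt_deriv_of_contDiffOn_Ici hX hx))
    (tendsto_modeBoundary hm hn hC)
  linarith [hL.nonneg fun x hx => modeSquare_nonneg hm hx]

end modes

lemma modeRemainder_le {m x I : ℝ} {n : ℕ} (hm : 0 < m) (hn : 2 ≤ n)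
    (hI : -(((n : ℝ) * ((n : ℝ) + 1) / 2 - 1) * x ^ 2 / (((n : ℝ) ^ 2 + n + 1) * m)) ≤ I) :
    ((n : ℝ) - 1) * ((n : ℝ) + 2) * x ^ 2 / (2 * ((n : ℝ) ^ 2 + n + 1) * (2 * (n : ℝ) + 1) ^ 3)
      ≤ 1 / 2 * (x ^ 2 / (2 * (n : ℝ) + 1)) - 3 / 2 * (x ^ 2 / (2 * (n : ℝ) + 1) ^ 3)
        + m / 2 * (cC n * I) := by
  have hn' : (2 : ℝ) ≤ n := by exact_mod_cast hn
  have hc : 0 ≤ m / 2 * cC n := by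
    unfold cC
    have : 0 ≤ (n : ℝ) - 1 := by linarith
    positivity
  have hboundary : m / 2 * (cC n *
      -(((n : ℝ) * ((n : ℝ) + 1) / 2 - 1) * x ^ 2 / (((n : ℝ) ^ 2 + n + 1) * m)))
      = ((n : ℝ) - 1) * ((n : ℝ) + 2) * x ^ 2
          / (2 * ((n : ℝ) ^ 2 + n + 1) * (2 * (n : ℝ) + 1) ^ 3)
        - 1 / 2 * (x ^ 2 / (2 * (n : ℝ) + 1)) + 3 / 2 * (x ^ 2 / (2 * (n : ℝ) + 1) ^ 3) := by
    have : (n : ℝ) - 1 ≠ 0 := by linarith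
    unfold cC
    field_simp
    ring
  nlinarith [mul_le_mul_of_nonneg_left hI hc]

lemma Finset.sum_range_succ_eq_add_add_sum_Icc {M : Type*} [AddCommMonoid M] (u : ℕ → M)
    {N : ℕ} (hN : 1 ≤ N) :
    ∑ n ∈ Finset.range (N + 1), u n = u 0 + u 1 + ∑ n ∈ Finset.Icc 2 N, u n := by
  rw [Finset.range_eq_Ico, Finset.sum_eq_sum_Ico_succ_bot (by omega),
    Finset.sum_eq_sum_Ico_succ_bot (by omega), Finset.Ico_add_one_right_eq_Icc, ← add_assoc]

theorem penrose_core_inequality_general (m : ℝ) (hm : 0 < m) (J : ℝ) (N0 : ℕ) (hN0 : 2 ≤ N0)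
    (f : ℝ → ℝ)
    (Xf Yf : ℕ → ℝ → ℝ)
    (hXf : ∀ n : ℕ, n ≤ N0 → ContDiffOn ℝ 1 (Xf n) (Set.Ici (m / 2)))
    (hXbdd : ∀ n : ℕ, n ≤ N0 → ∃ C : ℝ, ∀ r : ℝ, m / 2 ≤ r → |Xf n r| ≤ C)
    (hY1 : ∀ r : ℝ, Yf 1 r = r ^ 2 * psi0 m r / (3 * m) * deriv (Xf 1) r)
    (X1inf : ℝ) (hX1inf : Filter.Tendsto (Xf 1) Filter.atTop (nhds X1inf))
    (In : ℕ → ℝ)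
    (hIn : ∀ n : ℕ, 2 ≤ n → n ≤ N0 →
      ImproperEq
        (fun r : ℝ => ((r * deriv (Xf n) r - betaF m n r * Yf n r) ^ 2
            + 2 * ((n : ℝ) * ((n : ℝ) + 1) / 2 - 1) * alphaF m r * Xf n r * Yf n r)
          / (alphaF m r * r ^ 2 * psi0 m r))
        (m / 2) (In n))
    (hSq : ∀ n : ℕ, 2 ≤ n → n ≤ N0 → ∃ L : ℝ,
      ImproperEq
        (fun r : ℝ => (betaF m n r) ^ 2 / (alphaF m r * r ^ 2 * psi0 m r) *
          (Yf n r - r / betaF m n r * deriv (Xf n) r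
            + ((n : ℝ) * ((n : ℝ) + 1) / 2 - 1) * alphaF m r / (betaF m n r) ^ 2 * Xf n r) ^ 2)
        (m / 2) L)
    (PJ : ℝ)
    (hPJ : ImproperEq
      (fun r : ℝ => 2 * (m * alphaF m r / (4 * r ^ 2 * (psi0 m r) ^ 7)) *
        ∫ z in (-1 : ℝ)..1,
          ((deriv f r) ^ 2 * (1 - z ^ 2) ^ 2
            + (1 - z ^ 2) * (4 * f r * z + 3 * J) ^ 2 / r ^ 2))
      (m / 2) PJ)
    (I1 : ℝ)
    (hI1 : ImproperEq (fun r : ℝ => Xf 1 r * Yf 1 r / (r ^ 2 * psi0 m r)) (m / 2) I1) :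
    (Xf 0 (m / 2)) ^ 2
        - 3 / 2 * ∑ n ∈ Finset.range (N0 + 1), (Xf n (m / 2)) ^ 2 / (2 * (n : ℝ) + 1) ^ 3
        + PJ + 2 * m / 3 * I1 + m / 2 * ∑ n ∈ Finset.Icc 2 N0, cC n * In n
        + 1 / 2 * ∑ n ∈ Finset.range (N0 + 1), (Xf n (m / 2)) ^ 2 / (2 * (n : ℝ) + 1)
      ≥ J ^ 2 / (4 * m ^ 2) + 1 / 9 * X1inf ^ 2
        + ∑ n ∈ Finset.Icc 2 N0,
            (((n : ℝ) - 1) * ((n : ℝ) + 2) * (Xf n (m / 2)) ^ 2) /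
              (2 * ((n : ℝ) ^ 2 + (n : ℝ) + 1) * (2 * (n : ℝ) + 1) ^ 3) := by
  have hPJ' := sq_div_le_of_improperEq_angular hm hPJ
  have hdipole : 2 * m / 3 * I1 = (X1inf ^ 2 - Xf 1 (m / 2) ^ 2) / 9 := by
    rw [dipole_integral_eq hm (hXf 1 (by omega)) (fun r _ => hY1 r) hX1inf hI1]
    field_simp
    ring
  have hmodes : ∀ n ∈ Finset.Icc 2 N0,
      ((n : ℝ) - 1) * ((n : ℝ) + 2) * Xf n (m / 2) ^ 2
          / (2 * ((n : ℝ) ^ 2 + n + 1) * (2 * (n : ℝ) + 1) ^ 3)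
        ≤ 1 / 2 * (Xf n (m / 2) ^ 2 / (2 * (n : ℝ) + 1))
          - 3 / 2 * (Xf n (m / 2) ^ 2 / (2 * (n : ℝ) + 1) ^ 3) + m / 2 * (cC n * In n) := by
    intro n hn
    obtain ⟨hn2, hnN⟩ := Finset.mem_Icc.mp hn
    obtain ⟨L, hL⟩ := hSq n hn2 hnN
    refine modeRemainder_le hm hn2 ?_
    rw [← modeBoundary_half hm]
    exact neg_modeBoundary_le hm (by omega) (hXf n hnN) (hXbdd n hnN) (hIn n hn2 hnN) hL
  have hsum := Finset.sum_le_sum hmodes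
  rw [Finset.sum_add_distrib, Finset.sum_sub_distrib, ← Finset.mul_sum, ← Finset.mul_sum,
    ← Finset.mul_sum] at hsum
  rw [Finset.sum_range_succ_eq_add_add_sum_Icc _ (by omega),
    Finset.sum_range_succ_eq_add_add_sum_Icc _ (by omega)]
  norm_num
  linarith

/-- The analytic core of the main theorem: the perturbative Penrose functional,
expressed through Legendre modes and the angular-momentum contribution `P_J`,
dominates the momentum, angular-momentum and positive remainder terms (eq. (53a)). -/
theorem penrose_core_inequality (m : ℝ) (hm : 0 < m) (J : ℝ) (N0 : ℕ) (hN0 : 2 ≤ N0)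
    (f : ℝ → ℝ) (hf : ContDiffOn ℝ 1 f (Set.Ici (m / 2)))
    (Xf Yf : ℕ → ℝ → ℝ)
    (hXf : ∀ n : ℕ, n ≤ N0 → ContDiffOn ℝ 1 (Xf n) (Set.Ici (m / 2)))
    (hXbdd : ∀ n : ℕ, n ≤ N0 → ∃ C : ℝ, ∀ r : ℝ, m / 2 ≤ r → |Xf n r| ≤ C)
    (hYf : ∀ n : ℕ, 1 ≤ n → n ≤ N0 → ContinuousOn (Yf n) (Set.Ici (m / 2)))
    (hY1 : ∀ r : ℝ, Yf 1 r = r ^ 2 * psi0 m r / (3 * m) * deriv (Xf 1) r)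
    (X1inf : ℝ) (hX1inf : Filter.Tendsto (Xf 1) Filter.atTop (nhds X1inf))
    (In : ℕ → ℝ)
    (hIn : ∀ n : ℕ, 2 ≤ n → n ≤ N0 →
      ImproperEq
        (fun r : ℝ => ((r * deriv (Xf n) r - betaF m n r * Yf n r) ^ 2
            + 2 * ((n : ℝ) * ((n : ℝ) + 1) / 2 - 1) * alphaF m r * Xf n r * Yf n r)
          / (alphaF m r * r ^ 2 * psi0 m r))
        (m / 2) (In n))
    (hSq : ∀ n : ℕ, 2 ≤ n → n ≤ N0 → ∃ L : ℝ,
      ImproperEq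
        (fun r : ℝ => (betaF m n r) ^ 2 / (alphaF m r * r ^ 2 * psi0 m r) *
          (Yf n r - r / betaF m n r * deriv (Xf n) r
            + ((n : ℝ) * ((n : ℝ) + 1) / 2 - 1) * alphaF m r / (betaF m n r) ^ 2 * Xf n r) ^ 2)
        (m / 2) L)
    (PJ : ℝ)
    (hPJ : ImproperEq
      (fun r : ℝ => 2 * (m * alphaF m r / (4 * r ^ 2 * (psi0 m r) ^ 7)) *
        ∫ z in (-1 : ℝ)..1,
          ((deriv f r) ^ 2 * (1 - z ^ 2) ^ 2
            + (1 - z ^ 2) * (4 * f r * z + 3 * J) ^ 2 / r ^ 2))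
      (m / 2) PJ)
    (I1 : ℝ)
    (hI1 : ImproperEq (fun r : ℝ => Xf 1 r * Yf 1 r / (r ^ 2 * psi0 m r)) (m / 2) I1) :
    (Xf 0 (m / 2)) ^ 2
        - 3 / 2 * ∑ n ∈ Finset.range (N0 + 1), (Xf n (m / 2)) ^ 2 / (2 * (n : ℝ) + 1) ^ 3
        + PJ + 2 * m / 3 * I1 + m / 2 * ∑ n ∈ Finset.Icc 2 N0, cC n * In n
        + 1 / 2 * ∑ n ∈ Finset.range (N0 + 1), (Xf n (m / 2)) ^ 2 / (2 * (n : ℝ) + 1)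
      ≥ J ^ 2 / (4 * m ^ 2) + 1 / 9 * X1inf ^ 2
        + ∑ n ∈ Finset.Icc 2 N0,
            (((n : ℝ) - 1) * ((n : ℝ) + 2) * (Xf n (m / 2)) ^ 2) /
              (2 * ((n : ℝ) ^ 2 + (n : ℝ) + 1) * (2 * (n : ℝ) + 1) ^ 3) :=
  penrose_core_inequality_general m hm J N0 hN0 f Xf Yf hXf hXbdd hY1 X1inf hX1inf In hIn hSq PJ hPJ
    I1 hI1
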